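/- arXiv:2508.13830 — 3 statements merged into one kernel-verified Lean document; each statement's English description precedes it below -/
import Mathlib

section
/- Let D be a digraph, Z ⊆ V(D), and S ⊆ V(D) \ Z. If S is Z-guarded (i.e., no directed walk in D − Z starts and ends in S while using a vertex of V(D) \ (Z ∪ S)), and P is a directed path in D all of whose vertices lie outside Z, then the vertex set of P meets S in at most |Z| + 1 maximal intervals; equivalently, the subdigraph of P induced by V(P) ∩ S has at most |Z| + 1 weakly connected components. -/
/-!
Along a path avoiding `Z`, the segment between two vertices of `S` is a walk in `D − Z` that
starts and ends in `S`, so guardedness forces the whole segment into `S`. Hence the vertices of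
the path lying in `S` form a single interval, which is weakly connected.
-/

variable {V : Type*}

/-- A set `S` (disjoint from `Z`) is `Z`-guarded: no directed walk in `D − Z`
starts and ends in `S` while using a vertex of `V \ (Z ∪ S)`. -/
def DiGuarded (A : V → V → Prop) (Z S : Set V) : Prop :=
  ¬ ∃ (l : List V) (h : l ≠ []),
      l.Chain' A ∧ (∀ v ∈ l, v ∉ Z) ∧
      l.head h ∈ S ∧ l.getLast h ∈ S ∧ ∃ v ∈ l, v ∉ Z ∧ v ∉ S

/-- `S` is `w`-guarded: `Z`-guarded for some `Z` of size at most `w` disjoint from `S`. -/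
def DiWGuarded (A : V → V → Prop) (w : ℕ) (S : Set V) : Prop :=
  ∃ Z : Set V, Z.Finite ∧ Z.ncard ≤ w ∧ Disjoint S Z ∧ DiGuarded A Z S

/-- There is a directed walk from `u` to `v`. -/
def DiReaches (A : V → V → Prop) (u v : V) : Prop :=
  ∃ (l : List V) (h : l ≠ []), l.Chain' A ∧ l.head h = u ∧ l.getLast h = v

/-- There is a directed walk from `x` to `y` in `D − v`. -/
def DiReachesAvoid (A : V → V → Prop) (v x y : V) : Prop :=
  ∃ (l : List V) (h : l ≠ []), l.Chain' A ∧ (∀ u ∈ l, u ≠ v) ∧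
    l.head h = x ∧ l.getLast h = y

/-- Underlying undirected graph of the subdigraph induced by `X`. -/
def underUG (A : V → V → Prop) (X : Set V) : SimpleGraph X where
  Adj x y := x ≠ y ∧ (A x.1 y.1 ∨ A y.1 x.1)
  symm := by constructor; intro x y h; exact ⟨h.1.symm, h.2.symm⟩
  loopless := by constructor; intro x h; exact h.1 rfl

/-- Number of weakly connected components of the subdigraph induced by `X`. -/
noncomputable def numWeakComp (A : V → V → Prop) (X : Set V) : ℕ :=
  Nat.card (underUG A X).ConnectedComponent

/-- `x` and `y` are consecutive (in this order) in the list `p`. -/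
def ConsecIn (p : List V) (x y : V) : Prop :=
  ∃ l1 l2 : List V, p = l1 ++ x :: y :: l2

/-- There is no directed cycle all of whose vertices lie in `X`. -/
def DiAcyclicOn (A : V → V → Prop) (X : Set V) : Prop :=
  ¬ ∃ (l : List V) (h : l ≠ []), (∀ v ∈ l, v ∈ X) ∧ l.Nodup ∧ l.Chain' A ∧
      A (l.getLast h) (l.head h)

theorem DiGuarded.forall_mem_of_isChain {A : V → V → Prop} {Z S : Set V}
    (hguard : DiGuarded A Z S) {l : List V} (hl : l ≠ []) (hchain : l.IsChain A)
    (hZ : ∀ v ∈ l, v ∉ Z) (hhead : l.head hl ∈ S) (hlast : l.getLast hl ∈ S) :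
    ∀ v ∈ l, v ∈ S := by
  by_contra! ⟨v, hv, hvS⟩
  exact hguard ⟨l, hl, hchain, hZ, hhead, hlast, v, hv, hZ v hv, hvS⟩

theorem List.IsInfix.isChain_consecIn {p l : List V} (h : l <:+: p) : l.IsChain (ConsecIn p) := by
  obtain ⟨s, t, rfl⟩ := h
  refine List.isChain_iff_forall_rel_of_append_cons_cons.mpr fun {a b l₁ l₂} hl => ?_
  exact ⟨s ++ l₁, l₂ ++ t, by simp [hl]⟩

theorem List.exists_infix_head_getLast {p : List V} {x y : V} (hx : x ∈ p) (hy : y ∈ p) :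
    ∃ (l : List V) (hl : l ≠ []), l <:+: p ∧
      (l.head hl = x ∧ l.getLast hl = y ∨ l.head hl = y ∧ l.getLast hl = x) := by
  obtain ⟨s, t, rfl⟩ := List.append_of_mem hx
  rcases List.mem_append.mp hy with hys | hyt
  · obtain ⟨u, w, rfl⟩ := List.append_of_mem hys
    exact ⟨y :: w ++ [x], by simp, ⟨u, t, by simp⟩, Or.inr ⟨rfl, by simp⟩⟩
  · rcases List.mem_cons.mp hyt with rfl | hyt
    · exact ⟨[y], by simp, ⟨s, t, by simp⟩, Or.inl ⟨rfl, rfl⟩⟩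
    · obtain ⟨u, w, rfl⟩ := List.append_of_mem hyt
      exact ⟨x :: u ++ [y], by simp, ⟨s, w, by simp⟩, Or.inl ⟨rfl, by simp⟩⟩

section underUG

variable {A : V → V → Prop} {X : Set V}

theorem underUG_reachable_of_rel {x y : X} (h : A x y) : (underUG A X).Reachable x y := by
  by_cases hxy : x = y
  · exact hxy ▸ .refl x
  · exact SimpleGraph.Adj.reachable ⟨hxy, .inl h⟩

theorem underUG_reachable_head_getLast {l : List V} (hl : l ≠ []) (hchain : l.IsChain A)
    (hX : ∀ v ∈ l, v ∈ X) :
    (underUG A X).Reachable ⟨l.head hl, hX _ (l.head_mem hl)⟩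
      ⟨l.getLast hl, hX _ (l.getLast_mem hl)⟩ := by
  induction l with
  | nil => exact absurd rfl hl
  | cons a l ih =>
    match l, ih, hchain with
    | [], _, _ => exact .refl _
    | b :: l, ih, hchain =>
      obtain ⟨hab, hchain⟩ := List.isChain_cons_cons.mp hchain
      exact (underUG_reachable_of_rel (x := ⟨a, _⟩) (y := ⟨b, _⟩) hab).trans
        (ih (List.cons_ne_nil b l) hchain fun v hv => hX v (List.mem_cons_of_mem a hv))

theorem numWeakComp_le_one_of_preconnected (h : (underUG A X).Preconnected) :
    numWeakComp A X ≤ 1 :=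
  have := h.subsingleton_connectedComponent
  Finite.card_le_one_iff_subsingleton.mpr this

end underUG

theorem stmt0_general (A : V → V → Prop) (Z S : Set V)
    (hguard : DiGuarded A Z S)
    (p : List V) (hchain : p.Chain' A)
    (hZ : ∀ v ∈ p, v ∉ Z) :
    numWeakComp (ConsecIn p) {v | v ∈ p ∧ v ∈ S} ≤ Z.ncard + 1 := by
  refine (numWeakComp_le_one_of_preconnected ?_).trans (Nat.le_add_left 1 _)
  rintro ⟨x, hxp, hxS⟩ ⟨y, hyp, hyS⟩
  obtain ⟨l, hl, hinfix, hends⟩ := List.exists_infix_head_getLast hxp hyp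
  have hendsS : l.head hl ∈ S ∧ l.getLast hl ∈ S := by
    rcases hends with ⟨hhead, hlast⟩ | ⟨hhead, hlast⟩
    · exact hhead ▸ hlast ▸ ⟨hxS, hyS⟩
    · exact hhead ▸ hlast ▸ ⟨hyS, hxS⟩
  have hlS : ∀ v ∈ l, v ∈ S := hguard.forall_mem_of_isChain hl (List.IsChain.infix hchain hinfix)
    (fun v hv => hZ v (hinfix.subset hv)) hendsS.1 hendsS.2
  have hreach := underUG_reachable_head_getLast hl hinfix.isChain_consecIn
    (X := {v | v ∈ p ∧ v ∈ S}) fun v hv => ⟨hinfix.subset hv, hlS v hv⟩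
  rcases hends with ⟨rfl, rfl⟩ | ⟨rfl, rfl⟩
  · exact hreach
  · exact hreach.symm

theorem stmt0 [Fintype V] (A : V → V → Prop) (Z S : Set V)
    (hSZ : Disjoint S Z) (hguard : DiGuarded A Z S)
    (p : List V) (hchain : p.Chain' A) (hnodup : p.Nodup)
    (hZ : ∀ v ∈ p, v ∉ Z) :
    numWeakComp (ConsecIn p) {v | v ∈ p ∧ v ∈ S} ≤ Z.ncard + 1 :=
  stmt0_general A Z S hguard p hchain hZ
end

section
/- Let V be a finite set, N_1, …, N_k ⊆ V, and ℓ_1, …, ℓ_k non-negative integers. For each nonempty J ⊆ {1, …, k}, let X_J = {v ∈ V : {i : v ∈ N_i} = J}. Then there exist pairwise disjoint sets L_1, …, L_k with L_i ⊆ N_i and |L_i| = ℓ_i for all i, if and only if there exist non-negative integers t_i(J), defined for all nonempty J ⊆ {1, …, k} and i ∈ J, satisfying: (1) Σ_{J : i ∈ J} t_i(J) = ℓ_i for every i ∈ {1, …, k}, and (2) Σ_{i ∈ J} t_i(J) ≤ |X_J| for every nonempty J ⊆ {1, …, k}. -/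
variable {V : Type*}

/-!
Every vertex `v` lies in exactly one cell `X_J`, namely the one indexed by its profile
`J = {i | v ∈ N i}`. Given disjoint leaf sets `L i`, counting the leaves of `L i` in each cell
gives `t_i(J)`. Conversely, given `t`, each cell `X_J` can be cut into disjoint pieces of sizes
`t_i(J)`, `i ∈ J`; the union over `J ∋ i` of the `i`-th pieces is a valid `L i`, since a piece
of `X_J` lies in `N i` exactly when `i ∈ J`, and pieces of different cells are disjoint.
-/

open Finset Function

lemma exists_pairwiseDisjoint_subsets_card_eq {ι α : Type*} [DecidableEq ι] [DecidableEq α]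
    (I : Finset ι) (S : Finset α) (a : ι → ℕ) (h : ∑ i ∈ I, a i ≤ #S) :
    ∃ f : ι → Finset α, (∀ i ∈ I, f i ⊆ S ∧ #(f i) = a i) ∧
      (I : Set ι).PairwiseDisjoint f := by
  induction I using Finset.induction_on generalizing S with
  | empty => exact ⟨fun _ => ∅, by simp, by simp⟩
  | @insert i I hi ih =>
    rw [sum_insert hi] at h
    obtain ⟨B, hBS, hB⟩ := exists_subset_card_eq (le_of_add_le_left h)
    obtain ⟨f, hf, hdisj⟩ := ih (S \ B) (by rw [card_sdiff_of_subset hBS]; omega)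
    have hupdate : ∀ j ∈ I, update f i B j = f j := fun j hj =>
      update_of_ne (ne_of_mem_of_not_mem hj hi) _ _
    refine ⟨update f i B, ?_, ?_⟩
    · intro j hj
      rcases mem_insert.1 hj with rfl | hj
      · simpa using ⟨hBS, hB⟩
      · rw [hupdate j hj]
        exact ⟨(hf j hj).1.trans sdiff_subset, (hf j hj).2⟩
    · rw [coe_insert]
      refine (hdisj.mono_on fun j hj => (hupdate j hj).le).insert_of_notMem hi fun j hj => ?_
      rw [update_self, hupdate j hj]
      exact disjoint_of_subset_right (hf j hj).1 disjoint_sdiff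

section VennCells

variable {ι α : Type*} [Fintype ι] [DecidableEq α] (N : ι → Finset α)

def vennProfile (v : α) : Finset ι := univ.filter fun i => v ∈ N i

lemma mem_vennProfile {v : α} {i : ι} : i ∈ vennProfile N v ↔ v ∈ N i := by
  simp [vennProfile]

variable {N} [DecidableEq ι]

lemma sum_card_filter_vennProfile_eq_card {i : ι} {L : Finset α} (hL : L ⊆ N i) :
    ∑ J ∈ univ.filter (i ∈ ·), #(L.filter (vennProfile N · = J)) = #L :=
  (card_eq_sum_card_fiberwise fun v hv => by simpa [mem_vennProfile] using hL hv).symm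

variable (N) [Fintype α]

/-- The paper's `X_J`. -/
def vennCell (J : Finset ι) : Finset α := univ.filter fun v => vennProfile N v = J

variable {N}

lemma mem_vennCell {v : α} {J : Finset ι} : v ∈ vennCell N J ↔ vennProfile N v = J := by
  simp [vennCell]

lemma sum_card_filter_vennProfile_le_card_vennCell {L : ι → Finset α}
    (hL : Pairwise (Disjoint on L)) (J : Finset ι) :
    ∑ i ∈ J, #((L i).filter (vennProfile N · = J)) ≤ #(vennCell N J) := by
  rw [← card_biUnion fun i _ j _ hij => disjoint_filter_filter (hL hij)]
  refine card_le_card fun v hv => ?_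
  obtain ⟨i, -, hv⟩ := mem_biUnion.1 hv
  exact mem_vennCell.2 (mem_filter.1 hv).2

lemma exists_pairwise_disjoint_subsets_of_sum_le_card_vennCell (t : Finset ι → ι → ℕ)
    (ht : ∀ J, ∑ i ∈ J, t J i ≤ #(vennCell N J)) :
    ∃ L : ι → Finset α, (∀ i, L i ⊆ N i) ∧
      (∀ i, #(L i) = ∑ J ∈ univ.filter (i ∈ ·), t J i) ∧ Pairwise (Disjoint on L) := by
  choose g hg hdisj using fun J => exists_pairwiseDisjoint_subsets_card_eq J _ (t J) (ht J)
  have profile_eq {J : Finset ι} {i : ι} {v : α} (hi : i ∈ J) (hv : v ∈ g J i) :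
      vennProfile N v = J :=
    mem_vennCell.1 ((hg J i hi).1 hv)
  refine ⟨fun i => (univ.filter (i ∈ ·)).biUnion (g · i), fun i v hv => ?_, fun i => ?_,
    fun i j hij => disjoint_left.2 fun v hvi hvj => ?_⟩
  · obtain ⟨J, hJ, hv⟩ := mem_biUnion.1 hv
    have hi : i ∈ J := (mem_filter.1 hJ).2
    rw [← mem_vennProfile, profile_eq hi hv]
    exact hi
  · rw [card_biUnion]
    · exact sum_congr rfl fun J hJ => (hg J i (mem_filter.1 hJ).2).2
    · intro J hJ J' hJ' hJJ'
      refine disjoint_left.2 fun v hv hv' => hJJ' ?_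
      rw [← profile_eq (mem_filter.1 hJ).2 hv, profile_eq (mem_filter.1 hJ').2 hv']
  · obtain ⟨J, hJ, hvi⟩ := mem_biUnion.1 hvi
    obtain ⟨J', hJ', hvj⟩ := mem_biUnion.1 hvj
    have hi : i ∈ J := (mem_filter.1 hJ).2
    obtain rfl : J = J' := (profile_eq hi hvi).symm.trans (profile_eq (mem_filter.1 hJ').2 hvj)
    exact disjoint_left.1 (hdisj J hi (mem_filter.1 hJ').2 hij) hvi hvj

end VennCells

theorem stmt5 {W : Type*} [DecidableEq W] [Fintype W] (k : ℕ)
    (N : Fin k → Finset W) (ℓ : Fin k → ℕ) :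
    (∃ L : Fin k → Finset W, (∀ i, L i ⊆ N i) ∧ (∀ i, (L i).card = ℓ i) ∧
      ∀ i j, i ≠ j → Disjoint (L i) (L j)) ↔
    (∃ t : Finset (Fin k) → Fin k → ℕ,
      (∀ i : Fin k,
        ∑ J ∈ Finset.univ.filter (fun J : Finset (Fin k) => i ∈ J), t J i = ℓ i) ∧
      (∀ J : Finset (Fin k), J.Nonempty →
        ∑ i ∈ J, t J i ≤
          (Finset.univ.filter (fun v : W =>
            Finset.univ.filter (fun i : Fin k => v ∈ N i) = J)).card)) := by
  constructor
  · rintro ⟨L, hLN, hL, hdisj⟩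
    refine ⟨fun J i => #((L i).filter (vennProfile N · = J)), fun i => ?_, fun J _ => ?_⟩
    · rw [sum_card_filter_vennProfile_eq_card (hLN i), hL]
    · exact sum_card_filter_vennProfile_le_card_vennCell (fun i j hij => hdisj i j hij) J
  · rintro ⟨t, hℓ, hcell⟩
    have hcell' : ∀ J, ∑ i ∈ J, t J i ≤ #(vennCell N J) := fun J =>
      J.eq_empty_or_nonempty.elim (fun hJ => by simp [hJ]) (hcell J)
    obtain ⟨L, hLN, hL, hdisj⟩ :=
      exists_pairwise_disjoint_subsets_of_sum_le_card_vennCell t hcell'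
    exact ⟨L, hLN, fun i => (hL i).trans (hℓ i), fun i j hij => hdisj hij⟩
end

section
/- Let D be an antidirected path with vertices u_1, …, u_{2n+1} (in path order), whose arcs alternate direction so that each u_{2i} (for 1 ≤ i ≤ n) is a source with out-neighbors u_{2i−1} and u_{2i+1}, and each u_{2i+1} is a sink. Let S = {u_1, u_3, …, u_{2n+1}} be the set of sinks. Then S is ∅-guarded in D, and the subdigraph of D induced by S has exactly n + 1 weakly connected components (it has no arcs). Consequently, for every function f there exists an antidirected path H and a 0-guarded set X in H such that H[X] has more than f(0) weakly connected components; i.e., the class of antidirected paths does not have bounded breakability. -/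
variable {V : Type*}

/-- Arc relation of the antidirected path on `2n+1` vertices: the vertices at odd
(0-based) positions are the sources, with arcs towards both neighbours. -/
def antiA (n : ℕ) (i j : Fin (2 * n + 1)) : Prop :=
  Odd (i : ℕ) ∧ ((j : ℕ) = (i : ℕ) + 1 ∨ (i : ℕ) = (j : ℕ) + 1)

/-- The set of sinks of the antidirected path on `2n+1` vertices. -/
def antiS (n : ℕ) : Set (Fin (2 * n + 1)) := {i | Even (i : ℕ)}


/-! A directed walk that starts at a sink cannot leave it, so a set of sinks is guarded
for every `Z`; being independent, it splits into one weak component per vertex, and the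
antidirected path on `2n+1` vertices has `n+1` sinks. -/

lemma diGuarded_of_forall_not_arc_out {A : V → V → Prop} {Z S : Set V}
    (hS : ∀ s ∈ S, ∀ v, ¬ A s v) : DiGuarded A Z S := by
  rintro ⟨l, hl, hchain, -, hhead, -, v, hv, -, hvS⟩
  match l, hl, hchain with
  | [a], _, _ => exact hvS (List.mem_singleton.mp hv ▸ hhead)
  | a :: b :: _, _, hchain => exact hS a hhead b (List.isChain_cons_cons.mp hchain).1

lemma DiGuarded.diWGuarded_zero {A : V → V → Prop} {S : Set V} (h : DiGuarded A ∅ S) :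
    DiWGuarded A 0 S :=
  ⟨∅, Set.finite_empty, by simp, Set.disjoint_empty S, h⟩

lemma underUG_eq_bot {A : V → V → Prop} {X : Set V} (hX : ∀ x ∈ X, ∀ y ∈ X, ¬ A x y) :
    underUG A X = ⊥ := by
  ext x y
  simp [underUG, hX x x.2 y y.2, hX y y.2 x x.2]

lemma numWeakComp_eq_card {A : V → V → Prop} {X : Set V} (hX : ∀ x ∈ X, ∀ y ∈ X, ¬ A x y) :
    numWeakComp A X = Nat.card X := by
  rw [numWeakComp, underUG_eq_bot hX]
  refine (Nat.card_congr (Equiv.ofBijective _ ⟨fun x y hxy => ?_, Quot.mk_surjective⟩)).symm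
  exact SimpleGraph.reachable_bot.mp (SimpleGraph.ConnectedComponent.exact hxy)

lemma not_antiA_of_mem_antiS {n : ℕ} {i : Fin (2 * n + 1)} (hi : i ∈ antiS n) (j : Fin (2 * n + 1)) :
    ¬ antiA n i j :=
  fun hij => Nat.not_odd_iff_even.mpr hi hij.1

lemma antiS_eq_range (n : ℕ) :
    antiS n = Set.range (fun k : Fin (n + 1) => (⟨2 * k, by omega⟩ : Fin (2 * n + 1))) := by
  ext ⟨i, hi⟩
  simp only [antiS, Set.mem_ofPred_eq, Set.mem_range, Fin.ext_iff, even_iff_two_dvd]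
  exact ⟨fun ⟨k, hk⟩ => ⟨⟨k, by omega⟩, hk.symm⟩, fun ⟨k, hk⟩ => ⟨k, hk.symm⟩⟩

lemma card_antiS (n : ℕ) : Nat.card (antiS n) = n + 1 := by
  rw [antiS_eq_range, Nat.card_range_of_injective, Nat.card_eq_fintype_card, Fintype.card_fin]
  intro k l hkl
  simp only [Fin.mk.injEq] at hkl
  omega

lemma numWeakComp_antiS (n : ℕ) : numWeakComp (antiA n) (antiS n) = n + 1 := by
  rw [numWeakComp_eq_card fun i hi j _ => not_antiA_of_mem_antiS hi j, card_antiS]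

theorem stmt8 :
    (∀ n : ℕ,
      DiGuarded (antiA n) ∅ (antiS n) ∧
      (∀ i ∈ antiS n, ∀ j ∈ antiS n, ¬ antiA n i j) ∧
      numWeakComp (antiA n) (antiS n) = n + 1) ∧
    (∀ f : ℕ → ℕ, ∃ n : ℕ,
      DiWGuarded (antiA n) 0 (antiS n) ∧
      f 0 < numWeakComp (antiA n) (antiS n)) := by
  have guarded (n : ℕ) : DiGuarded (antiA n) ∅ (antiS n) :=
    diGuarded_of_forall_not_arc_out fun _ hi => not_antiA_of_mem_antiS hi
  refine ⟨fun n => ⟨guarded n, fun i hi j _ => not_antiA_of_mem_antiS hi j, numWeakComp_antiS n⟩,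
    fun f => ⟨f 0, (guarded (f 0)).diWGuarded_zero, ?_⟩⟩
  rw [numWeakComp_antiS]
  exact Nat.lt_succ_self _
end
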